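/- Let G be an n-vertex simple graph of twin-width at most k. Then cz(G) ≤ (k+2)·n, where cz(G) denotes the CZ-distance between G and the edgeless graph on V(G). -/

import Mathlib

variable {V : Type*}

open Classical in
/-- Local complementation at `v`: complement the induced subgraph on `N_G(v)`. -/
noncomputable def localComp (G : SimpleGraph V) (v : V) : SimpleGraph V where
  Adj x y := x ≠ y ∧ (if G.Adj v x ∧ G.Adj v y then ¬ G.Adj x y else G.Adj x y)
  symm := by
    constructor
    intro x y ⟨hxy, h⟩
    refine ⟨hxy.symm, ?_⟩
    by_cases hc : G.Adj v x ∧ G.Adj v y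
    · rw [if_pos hc] at h
      rw [if_pos ⟨hc.2, hc.1⟩]
      exact fun h' => h h'.symm
    · rw [if_neg hc] at h
      rw [if_neg (fun h' => hc ⟨h'.2, h'.1⟩)]
      exact h.symm
  loopless := ⟨fun x hx => hx.1 rfl⟩

/-- Toggle (add or remove) the edge `uv`. -/
def toggle (G : SimpleGraph V) (u v : V) : SimpleGraph V where
  Adj x y := x ≠ y ∧ Xor' (G.Adj x y) ((x = u ∧ y = v) ∨ (x = v ∧ y = u))
  symm := by
    constructor
    intro x y ⟨hxy, h⟩
    refine ⟨hxy.symm, ?_⟩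
    rw [G.adj_comm y x]
    unfold Xor' Xor at *
    tauto
  loopless := ⟨fun x hx => hx.1 rfl⟩

/-- Local equivalence: related by a sequence of local complementations. -/
def LocallyEquiv (G H : SimpleGraph V) : Prop :=
  Relation.ReflTransGen (fun A B => ∃ v, B = localComp A v) G H

/-- `CZle G H k` : there is a sequence `G = G₀, G₀', G₁, G₁', …, G_k, G_k' = H`
with each `Gᵢ'` locally equivalent to `Gᵢ` and each `Gᵢ` (i ≥ 1) obtained from
`G_{i-1}'` by adding or removing a single edge. -/
inductive CZle : SimpleGraph V → SimpleGraph V → ℕ → Prop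
  | base {G H : SimpleGraph V} : LocallyEquiv G H → CZle G H 0
  | step {G G' F H : SimpleGraph V} {k : ℕ} (u v : V) :
      LocallyEquiv G G' → u ≠ v → F = toggle G' u v → CZle F H k → CZle G H (k + 1)

/-- The CZ-distance between two graphs on the same vertex set. -/
noncomputable def czDist (G H : SimpleGraph V) : ℕ := sInf {k | CZle G H k}

/-- The CZ-distance of a graph: CZ-distance to the edgeless graph. -/
noncomputable def cz (G : SimpleGraph V) : ℕ := czDist G ⊥

open Classical in
/-- Complementing on a vertex set `X`: replace the induced subgraph on `X` by its complement. -/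
noncomputable def complOn (G : SimpleGraph V) (X : Set V) : SimpleGraph V :=
  SimpleGraph.fromRel (fun x y => if x ∈ X ∧ y ∈ X then ¬ G.Adj x y else G.Adj x y)

open Classical in
/-- The adjacency matrix over GF(2). -/
noncomputable def adjMat (G : SimpleGraph V) : Matrix V V (ZMod 2) :=
  fun x y => if G.Adj x y then 1 else 0

/-- `H` is a rank-`p` perturbation of `G`. -/
def IsRankPerturbation [Fintype V] (p : ℕ) (G H : SimpleGraph V) : Prop :=
  ∃ M : Matrix V V (ZMod 2), M.IsSymm ∧ M.rank ≤ p ∧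
    ∀ x y : V, x ≠ y → adjMat H x y = adjMat G x y + M x y

/-- `G` is a circle graph: the overlap graph of a family of closed intervals in `ℝ`
with pairwise distinct endpoints. -/
def IsCircleGraph (G : SimpleGraph V) : Prop :=
  ∃ l r : V → ℝ, (∀ v, l v < r v) ∧
    Function.Injective (fun p : V × Bool => if p.2 then r p.1 else l p.1) ∧
    ∀ x y, G.Adj x y ↔
      ((l x < l y ∧ l y < r x ∧ r x < r y) ∨ (l y < l x ∧ l x < r y ∧ r y < r x))

/-- Two vertex sets are homogeneous: complete or anticomplete to each other. -/
def Homog (G : SimpleGraph V) (X Y : Finset V) : Prop :=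
  (∀ x ∈ X, ∀ y ∈ Y, G.Adj x y) ∨ (∀ x ∈ X, ∀ y ∈ Y, ¬ G.Adj x y)

/-- Every part of the partition `P` has red degree (number of other parts it is
inhomogeneous to) at most `k`. -/
def RedDegLE [Fintype V] [DecidableEq V] (G : SimpleGraph V) (P : Finpartition (Finset.univ : Finset V))
    (k : ℕ) : Prop :=
  ∀ X ∈ P.parts, {Y : Finset V | Y ∈ P.parts ∧ Y ≠ X ∧ ¬ Homog G X Y}.ncard ≤ k

/-- One contraction: merge two parts of the partition. -/
def MergeStep [Fintype V] [DecidableEq V]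
    (P Q : Finpartition (Finset.univ : Finset V)) : Prop :=
  ∃ A B, A ∈ P.parts ∧ B ∈ P.parts ∧ A ≠ B ∧
    Q.parts = insert (A ∪ B) ((P.parts.erase A).erase B)

/-- `G` has twin-width at most `k`: there is a contraction (partition) sequence from
the discrete partition to the trivial one in which every partition has red degree at
most `k`. -/
def TwinWidthLE [Fintype V] [DecidableEq V] (G : SimpleGraph V) (k : ℕ) : Prop :=
  ∃ (m : ℕ) (seq : Fin (m + 1) → Finpartition (Finset.univ : Finset V)),
    (∀ X ∈ (seq 0).parts, X.card = 1) ∧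
    (seq (Fin.last m)).parts.card ≤ 1 ∧
    (∀ i : Fin m, MergeStep (seq i.castSucc) (seq i.succ)) ∧
    (∀ i, RedDegLE G (seq i) k)

/-- `H` is obtained from `G` (in which `u` is isolated) by adding all edges between `u`
and `N_G(v)`, possibly adding the edge `uv`, and then adding at most `k` additional
edges incident to `u`. -/
def ExtendStep (k : ℕ) (G H : SimpleGraph V) (u v : V) : Prop :=
  u ≠ v ∧ G.neighborSet u = ∅ ∧
  (∀ x y, x ≠ u → y ≠ u → (H.Adj x y ↔ G.Adj x y)) ∧
  G.neighborSet v ⊆ H.neighborSet u ∧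
  ∃ T : Finset V, T.card ≤ k ∧ H.neighborSet u ⊆ G.neighborSet v ∪ {v} ∪ ↑T

/-!
Fix a linear order on the vertices, call the least element of each part of a partition its
representative, and let `repGraph G P` keep only the edges of `G` between representatives. Along
a contraction sequence this graph starts as `G` and ends edgeless. When parts `A` and `B` are
merged, with `v` the least element of `A ∪ B`, say in `A`, and `u` the least element of `B`, only
`u` stops being a representative. Toggling the edges at `u` on which its neighbourhood differs
from `{v} ∪ N(v)` takes at most `k + 1` toggles: apart from `v`, each such vertex represents its
own part, which is red to `A ∪ B` because it tells `u` and `v` apart. Then `u` is a true twin of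
`v`, and local complementation at `v`, toggling `uv` and local complementation at `v` again
isolate `u`. So each of the at most `n` contractions costs at most `k + 2` toggles.
-/

open Finset
open scoped symmDiff

lemma localComp_adj (G : SimpleGraph V) (v x y : V) :
    (localComp G v).Adj x y ↔ x ≠ y ∧ Xor (G.Adj x y) (G.Adj v x ∧ G.Adj v y) := by
  classical
  change (x ≠ y ∧ if G.Adj v x ∧ G.Adj v y then ¬ G.Adj x y else G.Adj x y) ↔ _
  split_ifs with h <;> simp [h, xor_def]

lemma toggle_adj (G : SimpleGraph V) (u v x y : V) :
    (toggle G u v).Adj x y ↔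
      x ≠ y ∧ Xor (G.Adj x y) ((x = u ∧ y = v) ∨ (x = v ∧ y = u)) :=
  Iff.rfl

@[simp]
lemma localComp_localComp (G : SimpleGraph V) (v : V) : localComp (localComp G v) v = G := by
  ext x y
  simp only [localComp_adj, xor_def]
  by_cases hxy : x = y
  · simp [hxy]
  by_cases hxv : x = v <;> by_cases hyv : y = v <;> simp_all [G.adj_comm]; tauto

@[simp]
lemma toggle_toggle (G : SimpleGraph V) (u v : V) : toggle (toggle G u v) u v = G := by
  ext x y
  simp only [toggle_adj, xor_def]
  by_cases hxy : x = y
  · subst hxy; simp only [SimpleGraph.irrefl]; tauto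
  · tauto

def setNeighbors (G : SimpleGraph V) (u : V) (D : Finset V) : SimpleGraph V :=
  SimpleGraph.fromRel fun x y => (x ≠ u ∧ y ≠ u ∧ G.Adj x y) ∨ (x = u ∧ y ∈ D)

lemma setNeighbors_adj (G : SimpleGraph V) (u : V) (D : Finset V) (x y : V) :
    (setNeighbors G u D).Adj x y ↔
      (x ≠ u ∧ y ≠ u ∧ G.Adj x y) ∨ (x = u ∧ y ∈ D ∧ y ≠ u) ∨
        (y = u ∧ x ∈ D ∧ x ≠ u) := by
  simp only [setNeighbors, SimpleGraph.fromRel_adj]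
  by_cases hxy : x = y
  · subst hxy; simp only [SimpleGraph.irrefl]; tauto
  · constructor
    · rintro ⟨-, ⟨hx, hy, h⟩ | ⟨hx, h⟩ | ⟨hx, hy, h⟩ | ⟨hy, h⟩⟩ <;>
        grind [G.adj_comm]
    · rintro (⟨hx, hy, h⟩ | ⟨hx, h, -⟩ | ⟨hy, h, -⟩) <;> grind

lemma toggle_setNeighbors [DecidableEq V] (G : SimpleGraph V) (u w : V) (D : Finset V) :
    toggle (setNeighbors G u D) u w = setNeighbors G u (D ∆ {w}) := by
  ext x y
  simp only [toggle_adj, setNeighbors_adj, xor_def, mem_symmDiff, mem_singleton]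
  by_cases hxy : x = y
  · subst hxy; simp only [SimpleGraph.irrefl]; tauto
  · by_cases hx : x = u <;> by_cases hy : y = u <;> simp_all

lemma LocallyEquiv.refl (G : SimpleGraph V) : LocallyEquiv G G := Relation.ReflTransGen.refl

lemma LocallyEquiv.trans {G H K : SimpleGraph V} (h₁ : LocallyEquiv G H)
    (h₂ : LocallyEquiv H K) : LocallyEquiv G K :=
  Relation.ReflTransGen.trans h₁ h₂

lemma LocallyEquiv.localComp_right (G : SimpleGraph V) (v : V) : LocallyEquiv G (localComp G v) :=
  Relation.ReflTransGen.single ⟨v, rfl⟩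

namespace CZle

lemma of_locallyEquiv {G G' H : SimpleGraph V} {k : ℕ} (h : LocallyEquiv G G')
    (h' : CZle G' H k) : CZle G H k := by
  cases h' with
  | base h'' => exact base (h.trans h'')
  | step u v h₁ huv hF hrest => exact step u v (h.trans h₁) huv hF hrest

lemma toggle_left {G H : SimpleGraph V} {u v : V} {k : ℕ} (huv : u ≠ v)
    (h : CZle (toggle G u v) H k) : CZle G H (k + 1) :=
  step u v (LocallyEquiv.refl G) huv rfl h

lemma trans {G H K : SimpleGraph V} {j l : ℕ} (h₁ : CZle G H j) (h₂ : CZle H K l) :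
    CZle G K (j + l) := by
  induction h₁ generalizing K l with
  | base h => simpa using of_locallyEquiv h h₂
  | step u v hGG' huv hF _ ih => simpa [Nat.add_right_comm] using step u v hGG' huv hF (ih h₂)

end CZle

section SetNeighbors

variable [DecidableEq V]

lemma localComp_toggle_localComp [Fintype V] (G : SimpleGraph V) [DecidableRel G.Adj] {u v : V}
    (huv : u ≠ v) (hu : ∀ y, ¬ G.Adj u y) :
    localComp (toggle (localComp G v) u v) v =
      setNeighbors G u (insert v (G.neighborFinset v)) := by
  have hu' : ∀ y, ¬ G.Adj y u := fun y hy => hu y hy.symm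
  ext x y
  simp only [localComp_adj, toggle_adj, setNeighbors_adj, xor_def, mem_insert,
    SimpleGraph.mem_neighborFinset]
  by_cases hxy : x = y
  · subst hxy; simp only [SimpleGraph.irrefl]; tauto
  · by_cases hx : x = u <;> by_cases hy : y = u <;> by_cases hxv : x = v <;>
      by_cases hyv : y = v <;> simp_all [G.adj_comm] <;> grind

lemma czle_setNeighbors_symmDiff (K : SimpleGraph V) (u : V) (D S : Finset V) (hS : u ∉ S) :
    CZle (setNeighbors K u D) (setNeighbors K u (D ∆ S)) #S := by
  induction S using Finset.induction_on generalizing D with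
  | empty =>
    rw [card_empty, ← bot_eq_empty, symmDiff_bot]
    exact CZle.base (LocallyEquiv.refl _)
  | insert w S hwS ih =>
    have hwu : u ≠ w := by rintro rfl; exact hS (mem_insert_self u S)
    have hS' : u ∉ S := fun h => hS (mem_insert_of_mem h)
    have hins : insert w S = {w} ∆ S := by
      rw [(disjoint_singleton_left.2 hwS).symmDiff_eq_sup, insert_eq, sup_eq_union]
    rw [card_insert_of_notMem hwS, hins, ← symmDiff_assoc]
    refine CZle.toggle_left hwu ?_
    rw [toggle_setNeighbors]
    exact ih _ hS'

lemma czle_setNeighbors_insert_neighborFinset [Fintype V] (K : SimpleGraph V) [DecidableRel K.Adj]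
    {u v : V} (huv : u ≠ v) (hu : ∀ y, ¬ K.Adj u y) :
    CZle (setNeighbors K u (insert v (K.neighborFinset v))) K 1 := by
  rw [← localComp_toggle_localComp K huv hu]
  refine CZle.step u v (LocallyEquiv.localComp_right _ v) huv rfl (CZle.base ?_)
  simpa using LocallyEquiv.localComp_right (localComp K v) v

lemma czle_setNeighbors [Fintype V] (K : SimpleGraph V) [DecidableRel K.Adj] {u v : V}
    (huv : u ≠ v) (hu : ∀ y, ¬ K.Adj u y) (D : Finset V) (hD : u ∉ D) :
    CZle (setNeighbors K u D) K (#(D ∆ insert v (K.neighborFinset v)) + 1) := by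
  have hN : u ∉ insert v (K.neighborFinset v) := by
    simp only [mem_insert, SimpleGraph.mem_neighborFinset, not_or]
    exact ⟨huv, fun h => hu v h.symm⟩
  refine CZle.trans ?_ (czle_setNeighbors_insert_neighborFinset K huv hu)
  have h := czle_setNeighbors_symmDiff K u D (D ∆ insert v (K.neighborFinset v))
    (by simp only [mem_symmDiff, hD, hN]; tauto)
  rwa [symmDiff_symmDiff_cancel_left] at h

end SetNeighbors

lemma eq_setNeighbors_neighborFinset [Fintype V] [DecidableEq V] {H K : SimpleGraph V}
    [DecidableRel H.Adj] (u : V) (h : ∀ x y, x ≠ u → y ≠ u → (H.Adj x y ↔ K.Adj x y)) :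
    H = setNeighbors K u (H.neighborFinset u) := by
  ext x y
  rw [setNeighbors_adj, SimpleGraph.mem_neighborFinset, SimpleGraph.mem_neighborFinset]
  by_cases hx : x = u <;> by_cases hy : y = u
  · subst hx hy; simp
  · subst hx; simp [hy]
  · subst hy; simp [hx, H.adj_comm x]
  · simp [hx, hy, h x y hx hy]

section Representatives

variable [Fintype V] [DecidableEq V] [LinearOrder V]

def IsRep (P : Finpartition (univ : Finset V)) (x : V) : Prop :=
  IsLeast (P.part x : Set V) x

def repGraph (G : SimpleGraph V) (P : Finpartition (univ : Finset V)) : SimpleGraph V :=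
  ((⊤ : G.Subgraph).induce {x | IsRep P x}).spanningCoe

variable {P Q : Finpartition (univ : Finset V)}

lemma repGraph_adj (G : SimpleGraph V) (P : Finpartition (univ : Finset V)) (x y : V) :
    (repGraph G P).Adj x y ↔ IsRep P x ∧ IsRep P y ∧ G.Adj x y := by
  simp [repGraph]

lemma isRep_iff_isLeast {X : Finset V} {x : V} (hX : X ∈ P.parts) (hx : x ∈ X) :
    IsRep P x ↔ IsLeast (X : Set V) x := by
  rw [IsRep, P.part_eq_of_mem hX hx]

lemma IsRep.eq_of_part_eq {x y : V} (hx : IsRep P x) (hy : IsRep P y) (h : P.part x = P.part y) :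
    x = y :=
  hx.unique (h ▸ hy)

lemma exists_isRep_mem {X : Finset V} (hX : X ∈ P.parts) : ∃ x ∈ X, IsRep P x := by
  have hne := P.nonempty_of_mem_parts hX
  have hmin := X.min'_mem hne
  exact ⟨X.min' hne, hmin, (isRep_iff_isLeast hX hmin).2 (X.isLeast_min' hne)⟩

lemma repGraph_eq_self (G : SimpleGraph V) (h : ∀ X ∈ P.parts, #X = 1) : repGraph G P = G := by
  have hrep (x : V) : IsRep P x := by
    obtain ⟨a, ha⟩ := card_eq_one.1 (h _ (P.part_mem.2 (mem_univ x)))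
    have hx : x ∈ P.part x := P.mem_part (mem_univ x)
    have hxa : x = a := by simpa [ha] using hx
    rw [IsRep, ha, coe_singleton, hxa]
    exact isLeast_singleton
  ext x y
  simp [repGraph_adj, hrep]

lemma repGraph_eq_bot (G : SimpleGraph V) (h : #P.parts ≤ 1) : repGraph G P = ⊥ := by
  ext x y
  simp only [repGraph_adj, SimpleGraph.bot_adj, iff_false, not_and]
  intro hx hy hxy
  have hpart : P.part x = P.part y :=
    card_le_one.1 h _ (P.part_mem.2 (mem_univ x)) _ (P.part_mem.2 (mem_univ y))
  exact G.ne_of_adj hxy (hx.eq_of_part_eq hy hpart)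

lemma card_le_of_forall_isRep_not_homog {G : SimpleGraph V} {k : ℕ} (hred : RedDegLE G Q k)
    {X : Finset V} (hX : X ∈ Q.parts) {u v : V} (hu : u ∈ X) (hv : v ∈ X) (S : Finset V)
    (hS : ∀ y ∈ S, IsRep Q y ∧ y ∉ X ∧ ¬(G.Adj u y ↔ G.Adj v y)) : #S ≤ k := by
  rw [← Set.ncard_coe_finset]
  refine le_trans (Set.ncard_le_ncard_of_injOn Q.part ?_ ?_
    (Q.parts.finite_toSet.subset fun Y hY => hY.1)) (hred X hX)
  · intro y hy
    obtain ⟨-, hyX, hsep⟩ := hS y hy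
    have hy' : y ∈ Q.part y := Q.mem_part (mem_univ y)
    refine ⟨Q.part_mem.2 (mem_univ y), fun hYX => hyX (hYX ▸ hy'), ?_⟩
    rintro (hall | hnone)
    · exact hsep (iff_of_true (hall u hu y hy') (hall v hv y hy'))
    · exact hsep (iff_of_false (hnone u hu y hy') (hnone v hv y hy'))
  · intro y₁ hy₁ y₂ hy₂ h
    exact (hS y₁ hy₁).1.eq_of_part_eq (hS y₂ hy₂).1 h

end Representatives

section Merge

variable [Fintype V] [DecidableEq V] {P Q : Finpartition (univ : Finset V)} {A B : Finset V}

lemma part_eq_union_of_merge (hQ : Q.parts = insert (A ∪ B) ((P.parts.erase A).erase B)) {x : V}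
    (hx : x ∈ A ∪ B) : Q.part x = A ∪ B :=
  Q.part_eq_of_mem (hQ ▸ mem_insert_self _ _) hx

lemma part_eq_part_of_merge (hQ : Q.parts = insert (A ∪ B) ((P.parts.erase A).erase B)) {x : V}
    (hx : x ∉ A ∪ B) : Q.part x = P.part x := by
  have hxP : x ∈ P.part x := P.mem_part (mem_univ x)
  have hne {X : Finset V} (hX : X ⊆ A ∪ B) : P.part x ≠ X := fun h => hx (hX (h ▸ hxP))
  refine Q.part_eq_of_mem ?_ hxP
  rw [hQ, mem_insert, mem_erase, mem_erase]
  exact Or.inr ⟨hne subset_union_right, hne subset_union_left, P.part_mem.2 (mem_univ x)⟩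

lemma MergeStep.card_parts_add_one (h : MergeStep P Q) : #Q.parts + 1 = #P.parts := by
  obtain ⟨A, B, hA, hB, hAB, hQ⟩ := h
  have hsub {X : Finset V} (hX : X ∈ P.parts) (hXAB : X ⊆ A ∪ B)
      (hAB' : A ∪ B ∈ P.parts) : X = A ∪ B := by
    obtain ⟨x, hx⟩ := P.nonempty_of_mem_parts hX
    exact P.eq_of_mem_parts hX hAB' hx (hXAB hx)
  have hnotMem : A ∪ B ∉ (P.parts.erase A).erase B := fun h' =>
    have hAB' := mem_of_mem_erase (mem_of_mem_erase h')
    hAB ((hsub hA subset_union_left hAB').trans (hsub hB subset_union_right hAB').symm)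
  have h2 : 2 ≤ #P.parts := one_lt_card.2 ⟨A, hA, B, hB, hAB⟩
  rw [hQ, card_insert_of_notMem hnotMem, card_erase_of_mem (mem_erase.2 ⟨hAB.symm, hB⟩),
    card_erase_of_mem hA]
  omega

lemma card_parts_add_of_mergeSteps {m : ℕ} (seq : Fin (m + 1) → Finpartition (univ : Finset V))
    (hmerge : ∀ i : Fin m, MergeStep (seq i.castSucc) (seq i.succ)) (i : Fin (m + 1)) :
    #(seq i).parts + i = #(seq 0).parts := by
  induction i using Fin.induction with
  | zero => simp
  | succ i ih =>
    have := (hmerge i).card_parts_add_one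
    simp only [Fin.val_succ, Fin.val_castSucc] at ih ⊢
    omega

variable [LinearOrder V]

lemma isRep_merge_iff (hA : A ∈ P.parts) (hB : B ∈ P.parts) (hAB : A ≠ B)
    (hQ : Q.parts = insert (A ∪ B) ((P.parts.erase A).erase B)) {u v : V} (hvA : v ∈ A)
    (hv : IsLeast (↑(A ∪ B) : Set V) v) (huB : u ∈ B) (hu : IsRep P u) (x : V) :
    IsRep Q x ↔ IsRep P x ∧ x ≠ u := by
  by_cases hx : x ∈ A ∪ B
  · have hQx : IsRep Q x ↔ x = v := by
      rw [IsRep, part_eq_union_of_merge hQ hx]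
      exact ⟨fun h => h.unique hv, fun h => h ▸ hv⟩
    rw [hQx]
    rcases mem_union.1 hx with hxA | hxB
    · have hvA' : IsLeast (A : Set V) v := ⟨hvA, fun y hy => hv.2 (by simp [mem_coe.1 hy])⟩
      have hvu : v ≠ u := by rintro rfl; exact hAB (P.eq_of_mem_parts hA hB hvA huB)
      rw [isRep_iff_isLeast hA hxA]
      exact ⟨fun h => h ▸ ⟨hvA', hvu⟩, fun h => h.1.unique hvA'⟩
    · have hxv : x ≠ v := by rintro rfl; exact hAB (P.eq_of_mem_parts hA hB hvA hxB)
      have hPx : IsRep P x → x = u := fun h =>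
        h.eq_of_part_eq hu (by rw [P.part_eq_of_mem hB hxB, P.part_eq_of_mem hB huB])
      exact iff_of_false hxv fun h => h.2 (hPx h.1)
  · have hxu : x ≠ u := by rintro rfl; exact hx (mem_union_right _ huB)
    rw [IsRep, IsRep, part_eq_part_of_merge hQ hx]
    exact (and_iff_left hxu).symm

lemma czle_repGraph_of_merge {G : SimpleGraph V} {k : ℕ} (hred : RedDegLE G Q k)
    (hA : A ∈ P.parts) (hB : B ∈ P.parts) (hAB : A ≠ B)
    (hQ : Q.parts = insert (A ∪ B) ((P.parts.erase A).erase B)) {u v : V} (hvA : v ∈ A)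
    (hv : IsLeast (↑(A ∪ B) : Set V) v) (huB : u ∈ B) (hu : IsRep P u) :
    ∃ c ≤ k + 2, CZle (repGraph G P) (repGraph G Q) c := by
  classical
  have hrep := isRep_merge_iff hA hB hAB hQ hvA hv huB hu
  have huv : u ≠ v := by rintro rfl; exact hAB (P.eq_of_mem_parts hA hB hvA huB)
  have hQv : IsRep Q v := by
    rwa [IsRep, part_eq_union_of_merge hQ (mem_union_left _ hvA)]
  have hKu : ∀ y, ¬ (repGraph G Q).Adj u y := fun y h =>
    ((hrep u).1 ((repGraph_adj G Q u y).1 h).1).2 rfl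
  have hPK : repGraph G P = setNeighbors (repGraph G Q) u ((repGraph G P).neighborFinset u) :=
    eq_setNeighbors_neighborFinset u fun x y hx hy => by simp [repGraph_adj, hrep, hx, hy]
  set D := (repGraph G P).neighborFinset u
  set N := insert v ((repGraph G Q).neighborFinset v)
  have hDu : u ∉ D := by simp [D]
  have hsep :
      ∀ y ∈ (D ∆ N).erase v, IsRep Q y ∧ y ∉ A ∪ B ∧ ¬(G.Adj u y ↔ G.Adj v y) := by
    intro y hy
    have hyu : y ≠ u := by
      rintro rfl
      simp [D, N, mem_symmDiff, huv] at hy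
      exact hKu v hy.symm
    have hPQ : IsRep P y ↔ IsRep Q y := by simp [hrep, hyu]
    simp only [mem_erase, mem_symmDiff, D, N, mem_insert, SimpleGraph.mem_neighborFinset,
      repGraph_adj, hu, hQv, hPQ, true_and] at hy
    have hQy : IsRep Q y := by tauto
    refine ⟨hQy, fun hyAB => ?_, by tauto⟩
    rw [IsRep, part_eq_union_of_merge hQ hyAB] at hQy
    exact hy.1 (hQy.unique hv)
  refine ⟨#(D ∆ N) + 1, ?_, hPK ▸ czle_setNeighbors (repGraph G Q) huv hKu D hDu⟩
  have := card_le_of_forall_isRep_not_homog hred (hQ ▸ mem_insert_self _ _)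
    (mem_union_right _ huB) (mem_union_left _ hvA) _ hsep
  have := pred_card_le_card_erase (s := D ∆ N) (a := v)
  omega

lemma czle_repGraph_of_mergeStep (G : SimpleGraph V) {k : ℕ} (hm : MergeStep P Q)
    (hred : RedDegLE G Q k) : ∃ c ≤ k + 2, CZle (repGraph G P) (repGraph G Q) c := by
  obtain ⟨A, B, hA, hB, hAB, hQ⟩ := hm
  obtain ⟨v, hv⟩ : ∃ v, IsLeast (↑(A ∪ B) : Set V) v :=
    ⟨_, (A ∪ B).isLeast_min' ((P.nonempty_of_mem_parts hA).mono subset_union_left)⟩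
  wlog hvA : v ∈ A generalizing A B
  · have hvB : v ∈ B := by simpa [hvA] using hv.1
    refine this B A hB hA hAB.symm ?_ (by rwa [union_comm]) hvB
    rw [hQ, union_comm, erase_right_comm]
  obtain ⟨u, huB, hu⟩ := exists_isRep_mem hB
  exact czle_repGraph_of_merge hred hA hB hAB hQ hvA hv huB hu

lemma czle_repGraph_of_mergeSteps (G : SimpleGraph V) {k m : ℕ}
    (seq : Fin (m + 1) → Finpartition (univ : Finset V))
    (hmerge : ∀ i : Fin m, MergeStep (seq i.castSucc) (seq i.succ))
    (hred : ∀ i, RedDegLE G (seq i) k) (i : Fin (m + 1)) :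
    ∃ c ≤ (k + 2) * i, CZle (repGraph G (seq 0)) (repGraph G (seq i)) c := by
  induction i using Fin.induction with
  | zero => exact ⟨0, le_rfl, CZle.base (LocallyEquiv.refl _)⟩
  | succ i ih =>
    obtain ⟨c, hc, hcz⟩ := ih
    obtain ⟨c', hc', hcz'⟩ := czle_repGraph_of_mergeStep G (hmerge i) (hred i.succ)
    refine ⟨c + c', ?_, hcz.trans hcz'⟩
    rw [Fin.val_castSucc] at hc
    rw [Fin.val_succ, mul_add_one]
    omega

end Merge

theorem stmt12 [Fintype V] [DecidableEq V] (G : SimpleGraph V) (n k : ℕ)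
    (hn : Fintype.card V = n) (h : TwinWidthLE G k) : cz G ≤ (k + 2) * n := by
  let : LinearOrder V := LinearOrder.lift' _ (Fintype.equivFin V).injective
  obtain ⟨m, seq, hdiscrete, htrivial, hmerge, hred⟩ := h
  obtain ⟨c, hc, hcz⟩ := czle_repGraph_of_mergeSteps G seq hmerge hred (Fin.last m)
  rw [repGraph_eq_self G hdiscrete, repGraph_eq_bot G htrivial] at hcz
  have hm : m ≤ n := by
    have hcount := card_parts_add_of_mergeSteps seq hmerge (Fin.last m)
    have hle := (seq 0).card_parts_le_card
    rw [Fin.val_last] at hcount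
    rw [card_univ, hn] at hle
    omega
  calc cz G ≤ c := Nat.sInf_le hcz
    _ ≤ (k + 2) * m := hc
    _ ≤ (k + 2) * n := Nat.mul_le_mul_left _ hm
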